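/- arXiv:2509.19976 — 3 statements merged into one kernel-verified Lean document; each statement's English description precedes it below -/
import Mathlib

section
/- Let M be invertible, let ΔM = β·S·R with S an n×k matrix, R a k×n matrix, and β > 0 a scalar such that M + β·S·R is invertible and R·M⁻¹·S is invertible. Then as β → ∞, (M + β·S·R)⁻¹ converges to M⁻¹ − M⁻¹·S·(R·M⁻¹·S)⁻¹·R·M⁻¹. -/
/-!
Woodbury's identity with `C = β • 1` rewrites `(M + β • (S * R))⁻¹` as
`M⁻¹ - M⁻¹ * S * (β⁻¹ • 1 + R * M⁻¹ * S)⁻¹ * R * M⁻¹`. As `β → ∞` the middle matrix tends to the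
invertible `R * M⁻¹ * S`, so it is eventually invertible (which legitimises Woodbury), and matrix
inversion is continuous there.
-/

open Matrix Filter Topology

namespace Matrix

variable {m k 𝕜 : Type*} [Fintype m] [DecidableEq m] [Fintype k] [DecidableEq k] [Field 𝕜]

theorem inv_add_smul_mul_eq_sub {M : Matrix m m 𝕜} (S : Matrix m k 𝕜) (R : Matrix k m 𝕜)
    (hM : IsUnit M) {β : 𝕜} (hβ : β ≠ 0) (h : IsUnit (β⁻¹ • 1 + R * M⁻¹ * S)) :
    (M + β • (S * R))⁻¹ = M⁻¹ - M⁻¹ * S * (β⁻¹ • 1 + R * M⁻¹ * S)⁻¹ * R * M⁻¹ := by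
  have hinv : (β • (1 : Matrix k k 𝕜))⁻¹ = β⁻¹ • 1 := inv_eq_left_inv (by simp [smul_smul, hβ])
  have hC : IsUnit (β • (1 : Matrix k k 𝕜)) := (isUnit_iff_isUnit_det _).2 (by simp [hβ])
  rw [← hinv] at h ⊢
  simpa using add_mul_mul_inv_eq_sub M S _ R hM hC h

variable [TopologicalSpace 𝕜] [IsTopologicalDivisionRing 𝕜]

theorem isOpen_setOf_isUnit [T1Space 𝕜] : IsOpen {A : Matrix k k 𝕜 | IsUnit A} := by
  have hdet : {A : Matrix k k 𝕜 | IsUnit A} = det ⁻¹' {0}ᶜ := by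
    ext A
    simp [isUnit_iff_isUnit_det]
  exact hdet ▸ isOpen_compl_singleton.preimage continuous_id.matrix_det

theorem continuousAt_inv_of_isUnit {A : Matrix k k 𝕜} (hA : IsUnit A) :
    ContinuousAt Inv.inv A := by
  refine continuousAt_matrix_inv A ?_
  rw [Ring.inverse_eq_inv']
  exact continuousAt_inv₀ ((isUnit_iff_isUnit_det A).1 hA).ne_zero

end Matrix

theorem closing_limit_general {n k : ℕ}
    (M : Matrix (Fin n) (Fin n) ℝ)
    (S : Matrix (Fin n) (Fin k) ℝ)
    (R : Matrix (Fin k) (Fin n) ℝ)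
    (hM : IsUnit M)
    (hRMS : IsUnit (R * M⁻¹ * S)) :
    Tendsto (fun β : ℝ => (M + β • (S * R))⁻¹) atTop
      (nhds (M⁻¹ - M⁻¹ * S * (R * M⁻¹ * S)⁻¹ * R * M⁻¹)) := by
  set A := R * M⁻¹ * S
  have hA : Tendsto (fun β : ℝ => β⁻¹ • (1 : Matrix (Fin k) (Fin k) ℝ) + A) atTop (𝓝 A) := by
    simpa using ((tendsto_inv_atTop_zero (𝕜 := ℝ)).smul_const (1 : Matrix _ _ ℝ)).add_const A
  have hwoodbury : (fun β : ℝ => M⁻¹ - M⁻¹ * S * (β⁻¹ • 1 + A)⁻¹ * R * M⁻¹) =ᶠ[atTop]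
      fun β => (M + β • (S * R))⁻¹ := by
    filter_upwards [hA.eventually (isOpen_setOf_isUnit.mem_nhds hRMS), eventually_ne_atTop 0]
      with β hunit hβ
    exact (inv_add_smul_mul_eq_sub S R hM hβ hunit).symm
  have hsandwich : Continuous fun X : Matrix (Fin k) (Fin k) ℝ => M⁻¹ - M⁻¹ * S * X * R * M⁻¹ := by
    fun_prop
  exact (hsandwich.tendsto _).comp ((continuousAt_inv_of_isUnit hRMS).tendsto.comp hA)
    |>.congr' hwoodbury

/-- As the series susceptance `β → ∞`, the inverse `(M + β S R)⁻¹` converges to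
`M⁻¹ - M⁻¹ S (R M⁻¹ S)⁻¹ R M⁻¹`. -/
theorem closing_limit {n k : ℕ}
    (M : Matrix (Fin n) (Fin n) ℝ)
    (S : Matrix (Fin n) (Fin k) ℝ)
    (R : Matrix (Fin k) (Fin n) ℝ)
    (hM : IsUnit M)
    (hβ : ∀ β : ℝ, 0 < β → IsUnit (M + β • (S * R)))
    (hRMS : IsUnit (R * M⁻¹ * S)) :
    Tendsto (fun β : ℝ => (M + β • (S * R))⁻¹) atTop
      (nhds (M⁻¹ - M⁻¹ * S * (R * M⁻¹ * S)⁻¹ * R * M⁻¹)) :=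
  closing_limit_general M S R hM hRMS
end

section
/- If M_c is invertible and μ, ν are orthogonal vectors of squared norm 2 such that the 2×2 matrix [μ ν]ᵀ·(M_o − M_o·M_c⁻¹·M_o)·[μ ν] is invertible (where M_o = M_c + b·v²·(μμᵀ+ννᵀ) with b·v² > 0), then M_o is invertible and M_o⁻¹ = M_c⁻¹ + (1 − M_c⁻¹·M_o)·[μ ν]·([μ ν]ᵀ·(M_o − M_o·M_c⁻¹·M_o)·[μ ν])⁻¹·[μ ν]ᵀ·(1 − M_o·M_c⁻¹). -/
open Matrix

/-!
With `M_o = M_c + R C L` (here `R = B`, `L = Bᵀ`, `C = b v² • 1`, as `B Bᵀ = μμᵀ + ννᵀ`), one has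
`1 - M_c⁻¹ M_o = -M_c⁻¹ R C L` and `M_o M_c⁻¹ R = R S` with `S = 1 + C L M_c⁻¹ R`, so the
2×2 matrix is `W = -G (S C G)` with `G = L R`. Then `-W⁻¹ G` is an inverse of `S C G`, and the
correction term collapses to `-R C L M_c⁻¹ = 1 - M_o M_c⁻¹`: the formula is a right inverse of `M_o`.
-/

namespace Matrix

variable {m n α : Type*} [Fintype m] [Fintype n] [DecidableEq n] [CommRing α]
  {A M : Matrix n n α} {R : Matrix n m α} {C : Matrix m m α} {L : Matrix m n α}

lemma one_sub_inv_mul_of_eq_add (hA : IsUnit A) (hM : M = A + R * C * L) :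
    1 - A⁻¹ * M = -(A⁻¹ * R * C * L) := by
  rw [hM, Matrix.mul_add, nonsing_inv_mul A ((isUnit_iff_isUnit_det A).mp hA)]
  simp only [Matrix.mul_assoc, sub_add_cancel_left]

lemma one_sub_mul_inv_of_eq_add (hA : IsUnit A) (hM : M = A + R * C * L) :
    1 - M * A⁻¹ = -(R * C * L * A⁻¹) := by
  rw [hM, Matrix.add_mul, mul_nonsing_inv A ((isUnit_iff_isUnit_det A).mp hA),
    sub_add_cancel_left]

variable [DecidableEq m]

lemma mul_inv_mul_of_eq_add (hA : IsUnit A) (hM : M = A + R * C * L) :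
    M * A⁻¹ * R = R * (1 + C * L * A⁻¹ * R) := by
  rw [hM, Matrix.add_mul, mul_nonsing_inv A ((isUnit_iff_isUnit_det A).mp hA)]
  simp only [Matrix.add_mul, Matrix.one_mul, Matrix.mul_add, Matrix.mul_one, Matrix.mul_assoc]

lemma mul_sub_mul_inv_mul_mul_of_eq_add (hA : IsUnit A) (hM : M = A + R * C * L) :
    L * (M - M * A⁻¹ * M) * R = -(L * R * ((1 + C * L * A⁻¹ * R) * C * (L * R))) :=
  calc L * (M - M * A⁻¹ * M) * R
      = L * (M * (1 - A⁻¹ * M)) * R := by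
        rw [Matrix.mul_sub M, Matrix.mul_one, Matrix.mul_assoc M]
    _ = -(L * (M * A⁻¹ * R) * C * (L * R)) := by
        rw [one_sub_inv_mul_of_eq_add hA hM]
        simp only [Matrix.mul_neg, Matrix.neg_mul, Matrix.mul_assoc]
    _ = -(L * R * ((1 + C * L * A⁻¹ * R) * C * (L * R))) := by
        rw [mul_inv_mul_of_eq_add hA hM]
        simp only [Matrix.mul_assoc]

theorem isUnit_and_inv_eq_of_eq_add (hA : IsUnit A) (hM : M = A + R * C * L)
    (hW : IsUnit (L * (M - M * A⁻¹ * M) * R)) :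
    IsUnit M ∧
      M⁻¹ = A⁻¹ + (1 - A⁻¹ * M) * R * (L * (M - M * A⁻¹ * M) * R)⁻¹ * L * (1 - M * A⁻¹) := by
  set W := L * (M - M * A⁻¹ * M) * R
  set K := (1 + C * L * A⁻¹ * R) * C * (L * R)
  have hKinv : K * (W⁻¹ * (L * R)) = -1 := by
    have hWK : W = -(L * R * K) := mul_sub_mul_inv_mul_mul_of_eq_add hA hM
    have hleft : -(W⁻¹ * (L * R)) * K = 1 :=
      calc -(W⁻¹ * (L * R)) * K = W⁻¹ * -(L * R * K) := by
            simp only [Matrix.neg_mul, Matrix.mul_neg, Matrix.mul_assoc]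
        _ = 1 := by rw [← hWK, nonsing_inv_mul W ((isUnit_iff_isUnit_det W).mp hW)]
    rw [mul_eq_one_comm, Matrix.mul_neg] at hleft
    exact neg_eq_iff_eq_neg.mp hleft
  have hright : M * (A⁻¹ + (1 - A⁻¹ * M) * R * W⁻¹ * L * (1 - M * A⁻¹)) = 1 := by
    have hcorr : M * ((1 - A⁻¹ * M) * R * W⁻¹ * L * (1 - M * A⁻¹)) = -(R * C * L * A⁻¹) :=
      calc M * ((1 - A⁻¹ * M) * R * W⁻¹ * L * (1 - M * A⁻¹))
          = M * A⁻¹ * R * C * (L * R) * W⁻¹ * (L * R) * C * L * A⁻¹ := by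
            rw [one_sub_inv_mul_of_eq_add hA hM, one_sub_mul_inv_of_eq_add hA hM]
            simp only [Matrix.mul_neg, Matrix.neg_mul, neg_neg, Matrix.mul_assoc]
        _ = R * (K * (W⁻¹ * (L * R))) * C * L * A⁻¹ := by
            rw [mul_inv_mul_of_eq_add hA hM]
            simp only [K, Matrix.mul_assoc]
        _ = -(R * C * L * A⁻¹) := by
            rw [hKinv]
            simp only [Matrix.mul_neg, Matrix.mul_one, Matrix.neg_mul]
    rw [Matrix.mul_add, hcorr, ← one_sub_mul_inv_of_eq_add hA hM]
    abel
  exact ⟨(isUnit_iff_isUnit_det M).mpr (isUnit_det_of_right_inverse hright),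
    inv_eq_right_inv hright⟩

end Matrix

theorem bus_split_inverse_update_general {n : ℕ}
    (Mc Mo : Matrix (Fin n) (Fin n) ℝ)
    (μ ν : Fin n → ℝ)
    (b v : ℝ)
    (hMc : IsUnit Mc)
    (hMo : Mo = Mc + (b * v ^ 2) • (vecMulVec μ μ + vecMulVec ν ν))
    (B : Matrix (Fin n) (Fin 2) ℝ)
    (hB : B = Matrix.of fun i j => ![μ i, ν i] j)
    (hW : IsUnit (Bᵀ * (Mo - Mo * Mc⁻¹ * Mo) * B)) :
    IsUnit Mo ∧
      Mo⁻¹ = Mc⁻¹ + ((1 : Matrix (Fin n) (Fin n) ℝ) - Mc⁻¹ * Mo) * B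
          * (Bᵀ * (Mo - Mo * Mc⁻¹ * Mo) * B)⁻¹
          * Bᵀ * ((1 : Matrix (Fin n) (Fin n) ℝ) - Mo * Mc⁻¹) := by
  have hBBt : B * Bᵀ = vecMulVec μ μ + vecMulVec ν ν := by
    ext i k
    simp [hB, Matrix.mul_apply, Fin.sum_univ_two, vecMulVec_apply]
  have hMo' : Mo = Mc + B * ((b * v ^ 2) • (1 : Matrix (Fin 2) (Fin 2) ℝ)) * Bᵀ := by
    rw [hMo, Matrix.mul_smul, Matrix.mul_one, Matrix.smul_mul, hBBt]
  exact isUnit_and_inv_eq_of_eq_add hMc hMo' hW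

/-- Bus-split inverse update formula: if `M_c` is invertible, `μ, ν` are orthogonal vectors
of squared norm 2, `M_o = M_c + b v² (μμᵀ + ννᵀ)` with `b v² > 0`, and the 2×2 matrix
`[μ ν]ᵀ (M_o - M_o M_c⁻¹ M_o) [μ ν]` is invertible, then `M_o` is invertible and
`M_o⁻¹ = M_c⁻¹ + (1 - M_c⁻¹ M_o) [μ ν] ([μ ν]ᵀ (M_o - M_o M_c⁻¹ M_o) [μ ν])⁻¹ [μ ν]ᵀ (1 - M_o M_c⁻¹)`. -/
theorem bus_split_inverse_update {n : ℕ}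
    (Mc Mo : Matrix (Fin n) (Fin n) ℝ)
    (μ ν : Fin n → ℝ)
    (b v : ℝ) (hbv : 0 < b * v ^ 2)
    (hμν : μ ⬝ᵥ ν = 0) (hμμ : μ ⬝ᵥ μ = 2) (hνν : ν ⬝ᵥ ν = 2)
    (hMc : IsUnit Mc)
    (hMo : Mo = Mc + (b * v ^ 2) • (vecMulVec μ μ + vecMulVec ν ν))
    (B : Matrix (Fin n) (Fin 2) ℝ)
    (hB : B = Matrix.of fun i j => ![μ i, ν i] j)
    (hW : IsUnit (Bᵀ * (Mo - Mo * Mc⁻¹ * Mo) * B)) :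
    IsUnit Mo ∧
      Mo⁻¹ = Mc⁻¹ + ((1 : Matrix (Fin n) (Fin n) ℝ) - Mc⁻¹ * Mo) * B
          * (Bᵀ * (Mo - Mo * Mc⁻¹ * Mo) * B)⁻¹
          * Bᵀ * ((1 : Matrix (Fin n) (Fin n) ℝ) - Mo * Mc⁻¹) :=
  bus_split_inverse_update_general Mc Mo μ ν b v hMc hMo B hB hW
end

section
/- With the line-modification update of the previous setting and no change to the inhomogeneity (Δp̂ = Δq̂ = 0), the change in state variables projected onto any pair of vectors μ', ν' satisfies [μ'ᵀ(ψ,σ); ν'ᵀ(ψ,σ)] = −A'·(I₂ + D·A)⁻¹·D·[μᵀ(θ,u); νᵀ(θ,u)], where A' = [μ' ν']ᵀ·M⁻¹·[μ ν]. -/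
/-!
Write `M + B D C = M (1 + M⁻¹ B D C)`. Sylvester's determinant identity makes `M + B D C`
invertible as soon as `M` and the small matrix `1 + D (C M⁻¹ B)` are, and the push-through relation
`(M + B D C) M⁻¹ B = B (1 + D C M⁻¹ B)` gives the low-rank form
`(M + B D C)⁻¹ B D C = M⁻¹ B (1 + D C M⁻¹ B)⁻¹ D C` of the update, without inverting `D`.
Projecting onto the columns of `B'` turns `M⁻¹ B` into `A'` and `C = Bᵀ` into the projections of `x`.
-/

open Matrix

namespace Matrix

variable {m k R : Type*} [Fintype m] [DecidableEq m] [Fintype k] [DecidableEq k] [CommRing R]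
  {M : Matrix m m R} (B : Matrix m k R) (D : Matrix k k R) (C : Matrix k m R)

theorem add_mul_mul_mul_nonsing_inv_mul (hM : IsUnit M) :
    (M + B * D * C) * (M⁻¹ * B) = B * (1 + D * (C * M⁻¹ * B)) := by
  rw [Matrix.add_mul, mul_nonsing_inv_cancel_left _ _ ((isUnit_iff_isUnit_det M).mp hM),
    Matrix.mul_add, Matrix.mul_one]
  simp only [Matrix.mul_assoc]

theorem det_add_mul_mul (hM : IsUnit M) :
    (M + B * D * C).det = M.det * (1 + D * (C * M⁻¹ * B)).det := by
  have hfac : M + B * D * C = M * (1 + (M⁻¹ * B) * (D * C)) := by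
    rw [Matrix.mul_add, Matrix.mul_one, ← Matrix.mul_assoc,
      mul_nonsing_inv_cancel_left _ _ ((isUnit_iff_isUnit_det M).mp hM), Matrix.mul_assoc]
  rw [hfac, det_mul, det_one_add_mul_comm]
  simp only [Matrix.mul_assoc]

theorem isUnit_add_mul_mul (hM : IsUnit M) (hDA : IsUnit (1 + D * (C * M⁻¹ * B))) :
    IsUnit (M + B * D * C) := by
  rw [isUnit_iff_isUnit_det, det_add_mul_mul B D C hM]
  exact ((isUnit_iff_isUnit_det M).mp hM).mul ((isUnit_iff_isUnit_det _).mp hDA)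

theorem nonsing_inv_add_mul_mul_mul (hM : IsUnit M) (hDA : IsUnit (1 + D * (C * M⁻¹ * B))) :
    (M + B * D * C)⁻¹ * (B * D * C) = M⁻¹ * B * ((1 + D * (C * M⁻¹ * B))⁻¹ * D * C) := by
  set K := 1 + D * (C * M⁻¹ * B)
  have hN := (isUnit_iff_isUnit_det _).mp (isUnit_add_mul_mul B D C hM hDA)
  have hK := (isUnit_iff_isUnit_det _).mp hDA
  have hsplit : B * D * C = B * K * (K⁻¹ * D * C) := by
    rw [Matrix.mul_assoc B K, ← Matrix.mul_assoc K, ← Matrix.mul_assoc K, mul_nonsing_inv _ hK,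
      Matrix.one_mul, Matrix.mul_assoc]
  calc (M + B * D * C)⁻¹ * (B * D * C)
      = (M + B * D * C)⁻¹ * ((M + B * D * C) * (M⁻¹ * B) * (K⁻¹ * D * C)) := by
        rw [add_mul_mul_mul_nonsing_inv_mul B D C hM, ← hsplit]
    _ = M⁻¹ * B * (K⁻¹ * D * C) := by
        rw [Matrix.mul_assoc _ (M⁻¹ * B), nonsing_inv_mul_cancel_left _ _ hN]

end Matrix

theorem transpose_mulVec_of_cols {n : Type*} [Fintype n] {R : Type*} [CommSemiring R]
    (μ ν x : n → R) :
    (Matrix.of fun i j => ![μ i, ν i] j)ᵀ *ᵥ x = ![μ ⬝ᵥ x, ν ⬝ᵥ x] := by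
  ext j
  fin_cases j <;> rfl

/-- Generalized line modification distribution factor: the state change
`y = (ψ,σ) = -(M + [μ ν] D [μ ν]ᵀ)⁻¹ [μ ν] D [μ ν]ᵀ x` projected onto a monitored pair
`μ', ν'` satisfies `(μ'ᵀ y, ν'ᵀ y) = -A' (I₂ + D A)⁻¹ D (μᵀ x, νᵀ x)` where
`A' = [μ' ν']ᵀ M⁻¹ [μ ν]` and `A = [μ ν]ᵀ M⁻¹ [μ ν]`. -/
theorem lmdf_projection {n : ℕ}
    (M : Matrix (Fin n) (Fin n) ℝ)
    (μ ν μ' ν' : Fin n → ℝ)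
    (D : Matrix (Fin 2) (Fin 2) ℝ)
    (B B' : Matrix (Fin n) (Fin 2) ℝ)
    (hB : B = Matrix.of fun i j => ![μ i, ν i] j)
    (hB' : B' = Matrix.of fun i j => ![μ' i, ν' i] j)
    (A A' : Matrix (Fin 2) (Fin 2) ℝ)
    (hA : A = Bᵀ * M⁻¹ * B)
    (hA' : A' = B'ᵀ * M⁻¹ * B)
    (hM : IsUnit M)
    (hDA : IsUnit ((1 : Matrix (Fin 2) (Fin 2) ℝ) + D * A))
    (x y : Fin n → ℝ)
    (hy : y = -((M + B * D * Bᵀ)⁻¹ * (B * D * Bᵀ)).mulVec x) :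
    ![μ' ⬝ᵥ y, ν' ⬝ᵥ y]
      = -((A' * ((1 : Matrix (Fin 2) (Fin 2) ℝ) + D * A)⁻¹ * D).mulVec ![μ ⬝ᵥ x, ν ⬝ᵥ x]) := by
  subst hA hA'
  rw [← transpose_mulVec_of_cols, ← transpose_mulVec_of_cols, ← hB, ← hB', hy,
    nonsing_inv_add_mul_mul_mul B D Bᵀ hM hDA, mulVec_neg, mulVec_mulVec, mulVec_mulVec]
  simp only [Matrix.mul_assoc]
end
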